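/- Let $R$ be a finitely generated $\mathbb{Z}^r$-graded $k$-algebra ($k$ a field of characteristic zero) with canonical graded maximal ideal $\mathfrak{m} = \bigoplus_{v \neq 0} R_v$, and let $\phi \colon R \to R$ be a graded $k$-algebra endomorphism inducing an injective group endomorphism $\sigma$ on $\mathbb{Z}^r$ (i.e. $\phi(R_v) \subseteq R_{\sigma(v)}$). Fix homogeneous generators $a_1, \ldots, a_m$ of $\mathfrak{m}$ of nonzero degrees $\lambda_1, \ldots, \lambda_m$. If for every $i$ there exists $l \geq 1$ such that $\sigma^l(\lambda_i) \notin \{\lambda_1, \ldots, \lambda_m\}$, and moreover a homogeneous element of $\mathfrak{m}$ whose degree is not among the $\lambda_j$ lies in $\mathfrak{m}^2$, then $\phi$ is contracting: there exists $e \geq 1$ with $\phi^e(\mathfrak{m}) \subseteq \mathfrak{m}^2$. -/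
import Mathlib


/-!
**Statement 4.** Let `R` be a finitely generated `ℤʳ`-graded `k`-algebra (`k` a
field of characteristic zero) with canonical graded maximal ideal
`𝔪 = ⊕_{v ≠ 0} R_v`, and `φ : R → R` a graded `k`-algebra endomorphism inducing
an injective endomorphism `σ` of `ℤʳ` (`φ(R_v) ⊆ R_{σ v}`).  Fix homogeneous
generators `a₁, …, a_m` of `𝔪` of nonzero degrees `λ₁, …, λ_m`.  If for every `i`
there is `l ≥ 1` with `σ^l(λᵢ) ∉ {λ₁, …, λ_m}`, and every homogeneous element of
`𝔪` whose degree is not among the `λⱼ` lies in `𝔪²`, then `φ` is contracting: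
`φ^e(𝔪) ⊆ 𝔪²` for some `e ≥ 1`.
-/

theorem contracting_of_degrees_escape
    {k R : Type} [Field k] [CharZero k] [CommRing R] [Algebra k R]
    {r : ℕ} (𝒜 : (Fin r → ℤ) → Submodule k R) [GradedAlgebra 𝒜]
    (hfg : Algebra.FiniteType k R)
    (𝔪 : Ideal R)
    -- `𝔪 = ⊕_{v ≠ 0} R_v` is the canonical graded maximal ideal
    (h𝔪 : ∀ x : R, x ∈ 𝔪 ↔ (DirectSum.decompose 𝒜 x 0 : R) = 0)
    (σ : (Fin r → ℤ) →+ (Fin r → ℤ)) (hσ : Function.Injective σ)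
    (φ : R →ₐ[k] R)
    (hgraded : ∀ v : Fin r → ℤ, ∀ x ∈ 𝒜 v, φ x ∈ 𝒜 (σ v))
    {m : ℕ} (a : Fin m → R) (lam : Fin m → (Fin r → ℤ))
    (hlam : ∀ i, lam i ≠ 0)
    (ha : ∀ i, a i ∈ 𝒜 (lam i))
    (hgen : Ideal.span (Set.range a) = 𝔪)
    -- every generator degree eventually escapes the finite set of generator degrees
    (hescape : ∀ i, ∃ l, 1 ≤ l ∧ (⇑σ)^[l] (lam i) ∉ Set.range lam)
    -- a homogeneous element of `𝔪` whose degree is not a generator degree lies in `𝔪²`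
    (hout : ∀ (v : Fin r → ℤ) (x : R), x ∈ 𝒜 v → x ∈ 𝔪 → v ∉ Set.range lam →
      x ∈ 𝔪 ^ 2) :
    ∃ e, 1 ≤ e ∧ ∀ x ∈ 𝔪, (⇑φ)^[e] x ∈ 𝔪 ^ 2 := by
  classical
  have hmem𝔪 : ∀ v : Fin r → ℤ, v ≠ 0 → ∀ x ∈ 𝒜 v, x ∈ 𝔪 := by
    intro v hv x hx
    rw [h𝔪]
    exact DirectSum.decompose_of_mem_ne 𝒜 hx hv
  have hσne : ∀ v : Fin r → ℤ, v ≠ 0 → σ v ≠ 0 := by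
    intro v hv h
    exact hv (hσ (by simpa using h))
  -- φ maps 𝔪 into 𝔪
  have hφa : ∀ i : Fin m, φ (a i) ∈ 𝔪 :=
    fun i => hmem𝔪 _ (hσne _ (hlam i)) _ (hgraded _ _ (ha i))
  have hmap : Ideal.map (φ : R →+* R) 𝔪 ≤ 𝔪 := by
    rw [← hgen, Ideal.map_span, Ideal.span_le]
    rintro _ ⟨_, ⟨i, rfl⟩, rfl⟩
    simp only [SetLike.mem_coe, hgen]
    exact hφa i
  have hφ𝔪 : ∀ x ∈ 𝔪, φ x ∈ 𝔪 := fun x hx =>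
    hmap (Ideal.mem_map_of_mem _ hx)
  have hφ𝔪2 : ∀ x ∈ 𝔪 ^ 2, φ x ∈ 𝔪 ^ 2 := by
    intro x hx
    have : φ x ∈ Ideal.map (φ : R →+* R) (𝔪 ^ 2) := Ideal.mem_map_of_mem _ hx
    rw [Ideal.map_pow] at this
    exact Ideal.pow_right_mono hmap 2 this
  have hit𝔪 : ∀ n : ℕ, ∀ x ∈ 𝔪, (⇑φ)^[n] x ∈ 𝔪 := by
    intro n
    induction n with
    | zero => simpa using fun x hx => hx
    | succ n ih =>
        intro x hx
        rw [Function.iterate_succ_apply']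
        exact hφ𝔪 _ (ih x hx)
  have hit𝔪2 : ∀ n : ℕ, ∀ x ∈ 𝔪 ^ 2, (⇑φ)^[n] x ∈ 𝔪 ^ 2 := by
    intro n
    induction n with
    | zero => simpa using fun x hx => hx
    | succ n ih =>
        intro x hx
        rw [Function.iterate_succ_apply']
        exact hφ𝔪2 _ (ih x hx)
  have hdeg : ∀ n : ℕ, ∀ v : Fin r → ℤ, ∀ x ∈ 𝒜 v, (⇑φ)^[n] x ∈ 𝒜 ((⇑σ)^[n] v) := by
    intro n
    induction n with
    | zero => simpa using fun v x hx => hx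
    | succ n ih =>
        intro v x hx
        rw [Function.iterate_succ_apply', Function.iterate_succ_apply']
        exact hgraded _ _ (ih v x hx)
  choose l hl1 hl2 using hescape
  refine ⟨max 1 (Finset.univ.sup l), le_max_left _ _, ?_⟩
  set e := max 1 (Finset.univ.sup l) with he
  have hgen2 : ∀ i : Fin m, (⇑φ)^[e] (a i) ∈ 𝔪 ^ 2 := by
    intro i
    have hle : l i ≤ e := le_max_of_le_right (Finset.le_sup (Finset.mem_univ i))
    have : e = (e - l i) + l i := (Nat.sub_add_cancel hle).symm
    rw [this, Function.iterate_add_apply]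
    refine hit𝔪2 _ _ ?_
    exact hout _ _ (hdeg _ _ _ (ha i))
      (hit𝔪 _ _ (hmem𝔪 _ (hlam i) _ (ha i))) (hl2 i)
  intro x hx
  have hcoe : (⇑φ)^[e] = ⇑((φ : R →+* R) ^ e) := by
    rw [RingHom.coe_pow]; rfl
  rw [hcoe]
  have : ((φ : R →+* R) ^ e) x ∈ Ideal.map ((φ : R →+* R) ^ e) 𝔪 :=
    Ideal.mem_map_of_mem _ hx
  refine ?_ ; revert this
  have hle : Ideal.map ((φ : R →+* R) ^ e) 𝔪 ≤ 𝔪 ^ 2 := by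
    rw [← hgen, Ideal.map_span, Ideal.span_le]
    rintro _ ⟨_, ⟨i, rfl⟩, rfl⟩
    have := hgen2 i
    rw [hcoe] at this
    simpa only [SetLike.mem_coe, hgen] using this
  exact fun h => hle h
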